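/- arXiv:2105.02398 — 4 statements merged into one kernel-verified Lean document; each statement's English description precedes it below -/
import Mathlib

section
/- For all real θ, φ, ω, δ_L, δ_R, one has Z_{δ_L} · (Z_{-θ} X_{π/2} Z_{θ})(Z_{-φ} X_{π} Z_{φ})(Z_{-ω} X_{π/2} Z_{ω}) · Z_{δ_R} = (Z_{-θ'} X_{π/2} Z_{θ'})(Z_{-φ'} X_{π} Z_{φ'})(Z_{-ω'} X_{π/2} Z_{ω'}), where θ' = θ - δ_L, φ' = φ + (δ_R - δ_L)/2, and ω' = ω + δ_R. That is, additional left and right Z rotations can be absorbed into the three-pulse compilation by a simple update of the three phase shifts. -/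
open Complex Matrix
noncomputable def Zgate (θ : ℝ) : Matrix (Fin 2) (Fin 2) ℂ :=
  !![exp (θ / 2 * I), 0; 0, exp (-(θ / 2) * I)]
noncomputable def Xgate (σ : ℝ) : Matrix (Fin 2) (Fin 2) ℂ :=
  !![(Real.cos (σ / 2) : ℂ), -I * Real.sin (σ / 2); -I * Real.sin (σ / 2), Real.cos (σ / 2)]

lemma Zgate_mul (a b : ℝ) : Zgate a * Zgate b = Zgate (a + b) := by
  ext i j
  fin_cases i <;> fin_cases j <;>
    simp [Zgate, Matrix.mul_apply, Fin.sum_univ_two, ← Complex.exp_add] <;>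
    · congr 1; ring

lemma Zgate_mul' (a b : ℝ) (M : Matrix (Fin 2) (Fin 2) ℂ) :
    Zgate a * (Zgate b * M) = Zgate (a + b) * M := by
  rw [← Matrix.mul_assoc, Zgate_mul]

lemma Zgate_Xpi (a : ℝ) : Zgate a * Xgate Real.pi = Xgate Real.pi * Zgate (-a) := by
  ext i j
  fin_cases i <;> fin_cases j <;>
    simp [Zgate, Xgate, Matrix.mul_apply, Fin.sum_univ_two, Real.cos_pi_div_two,
      Real.sin_pi_div_two] <;>
    ring_nf

lemma Zgate_Xpi' (a : ℝ) (M : Matrix (Fin 2) (Fin 2) ℂ) :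
    Zgate a * (Xgate Real.pi * M) = Xgate Real.pi * (Zgate (-a) * M) := by
  rw [← Matrix.mul_assoc, Zgate_Xpi, Matrix.mul_assoc]

theorem three_pulse_absorb_Z (θ φ ω δL δR : ℝ) :
    Zgate δL *
      ((Zgate (-θ) * Xgate (Real.pi / 2) * Zgate θ) *
        (Zgate (-φ) * Xgate Real.pi * Zgate φ) *
        (Zgate (-ω) * Xgate (Real.pi / 2) * Zgate ω)) *
      Zgate δR =
    (Zgate (-(θ - δL)) * Xgate (Real.pi / 2) * Zgate (θ - δL)) *
      (Zgate (-(φ + (δR - δL) / 2)) * Xgate Real.pi * Zgate (φ + (δR - δL) / 2)) *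
      (Zgate (-(ω + δR)) * Xgate (Real.pi / 2) * Zgate (ω + δR)) := by
  simp only [Matrix.mul_assoc, Zgate_mul', Zgate_mul, Zgate_Xpi', Zgate_Xpi]
  ring_nf
end

section
/- A two-qubit unitary U ∈ SU(4) is a phase carrier if and only if the elementwise absolute value of U is a permutation matrix and the induced permutation π : ℤ₂ × ℤ₂ → ℤ₂ × ℤ₂ satisfies π(ā, b̄) = (overline of π(a,b)) for all a, b ∈ ℤ₂, where the bar denotes flipping both bits. -/
/-!
Both `Z_{θ₀} ⊗ Z_{θ₁}` and `Z_{φ₀} ⊗ Z_{φ₁}` are diagonal, so `U` carries one to the other exactly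
when every nonzero entry `U i j` sees the same phase at `i` and at `j`. For `(θ₀, θ₁) = (π, π/2)`
the four diagonal phases are distinct, so each row of `U` has a single nonzero entry and unitarity
makes `U` a permutation matrix up to phases. Every phase vector `p` satisfies
`p (flip j) = (p j)⁻¹`, while the phases of `(π, π)` are `±1` and separate the two orbits
`{00, 11}`, `{01, 10}` of the bit flip; this forces the permutation to commute with the flip.
Conversely, the angle vectors of `Z_{φ₀} ⊗ Z_{φ₁}` are exactly the real functions that are odd
under the flip, and transporting the angles of `(θ₀, θ₁)` along a flip-commuting permutation keeps
them odd.
-/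

open Complex Matrix Kronecker

/-- A two-qubit gate is a phase carrier if `Z` rotations can be carried across it. -/
def IsPhaseCarrier (U : Matrix (Fin 2 × Fin 2) (Fin 2 × Fin 2) ℂ) : Prop :=
  ∀ θ₀ θ₁ : ℝ, ∃ φ₀ φ₁ : ℝ, U * (Zgate θ₀ ⊗ₖ Zgate θ₁) = (Zgate φ₀ ⊗ₖ Zgate φ₁) * U

namespace Matrix

theorem mul_diagonal_eq_diagonal_mul_iff {m n R : Type*} [Fintype m] [Fintype n]
    [DecidableEq m] [DecidableEq n] [CommRing R] [NoZeroDivisors R]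
    (U : Matrix m n R) (d : n → R) (d' : m → R) :
    U * diagonal d = diagonal d' * U ↔ ∀ i j, U i j ≠ 0 → d' i = d j := by
  rw [← ext_iff]
  refine forall₂_congr fun i j => ?_
  rw [mul_diagonal, diagonal_mul, mul_comm (d' i), mul_eq_mul_left_iff, or_iff_not_imp_right,
    eq_comm (a := d j)]

variable {𝕜 n : Type*} [RCLike 𝕜] [Fintype n] [DecidableEq n]

theorem sum_norm_sq_row_eq_one {U : Matrix n n 𝕜} (hU : U ∈ unitaryGroup n 𝕜) (i : n) :
    ∑ j, ‖U i j‖ ^ 2 = 1 := by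
  have h := congrFun (congrFun (mem_unitaryGroup_iff.mp hU) i) i
  simp only [mul_apply, star_apply, ← starRingEnd_apply, RCLike.mul_conj, one_apply_eq] at h
  exact_mod_cast h

theorem exists_perm_norm_eq_of_mem_unitaryGroup {U : Matrix n n 𝕜} (hU : U ∈ unitaryGroup n 𝕜)
    (hrow : ∀ i j k, U i j ≠ 0 → U i k ≠ 0 → j = k) :
    ∃ σ : Equiv.Perm n, ∀ i j, ‖U i j‖ = if i = σ j then 1 else 0 := by
  have hcol : ∀ j, ∃ i, U i j ≠ 0 := by
    intro j
    by_contra! h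
    simpa [h] using sum_norm_sq_row_eq_one (transpose_mem_unitaryGroup_iff.mpr hU) j
  choose g hg using hcol
  have hg_inj : Function.Injective g := fun j k hjk => hrow _ j k (hg j) (hjk ▸ hg k)
  set σ := Equiv.ofBijective g (Finite.injective_iff_bijective.mp hg_inj)
  refine ⟨σ, fun i j => ?_⟩
  split_ifs with h
  · subst h
    have hrow_one := sum_norm_sq_row_eq_one hU (g j)
    rw [Finset.sum_eq_single j (fun k _ hk => ?_) (by simp)] at hrow_one
    · exact (pow_eq_one_iff_of_nonneg (norm_nonneg _) two_ne_zero).mp hrow_one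
    · rw [norm_eq_zero.mpr (not_not.mp fun hk' => hk (hrow _ k j hk' (hg j))), zero_pow two_ne_zero]
  · obtain ⟨k, rfl⟩ := σ.surjective i
    refine norm_eq_zero.mpr (not_not.mp fun hjk => h ?_)
    rw [hrow _ j k hjk (hg k)]

end Matrix

def bitFlip (x : Fin 2 × Fin 2) : Fin 2 × Fin 2 := (x.1 + 1, x.2 + 1)

theorem bitFlip_ne_self (x : Fin 2 × Fin 2) : bitFlip x ≠ x := by
  revert x; decide

theorem eq_bitFlip_of_ne {j k : Fin 2 × Fin 2} (hne : k ≠ j) (hdiag : k.1 = k.2 ↔ j.1 = j.2) :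
    k = bitFlip j := by
  revert j k; decide

def bitSign (a : Fin 2) : ℝ := if a = 0 then 1 else -1

@[simp] theorem bitSign_zero : bitSign 0 = 1 := rfl

@[simp] theorem bitSign_one : bitSign 1 = -1 := rfl

theorem bitSign_add_one (a : Fin 2) : bitSign (a + 1) = -bitSign a := by
  fin_cases a <;> simp

noncomputable def zAngle (θ₀ θ₁ : ℝ) (j : Fin 2 × Fin 2) : ℝ :=
  (bitSign j.1 * θ₀ + bitSign j.2 * θ₁) / 2

noncomputable def zPhase (θ₀ θ₁ : ℝ) (j : Fin 2 × Fin 2) : ℂ :=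
  exp (zAngle θ₀ θ₁ j * I)

theorem Zgate_eq_diagonal (θ : ℝ) :
    Zgate θ = diagonal fun a => exp ((bitSign a * θ / 2 : ℝ) * I) := by
  ext a b
  fin_cases a <;> fin_cases b <;> simp [Zgate, bitSign, neg_div]

theorem Zgate_kronecker_Zgate (θ₀ θ₁ : ℝ) : Zgate θ₀ ⊗ₖ Zgate θ₁ = diagonal (zPhase θ₀ θ₁) := by
  rw [Zgate_eq_diagonal, Zgate_eq_diagonal, diagonal_kronecker_diagonal]
  congr 1
  funext j
  rw [zPhase, zAngle, ← exp_add]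
  push_cast
  ring_nf

theorem isPhaseCarrier_iff (U : Matrix (Fin 2 × Fin 2) (Fin 2 × Fin 2) ℂ) :
    IsPhaseCarrier U ↔
      ∀ θ₀ θ₁ : ℝ, ∃ φ₀ φ₁ : ℝ, ∀ i j, U i j ≠ 0 → zPhase φ₀ φ₁ i = zPhase θ₀ θ₁ j := by
  simp only [IsPhaseCarrier, Zgate_kronecker_Zgate, mul_diagonal_eq_diagonal_mul_iff]

theorem zAngle_bitFlip (θ₀ θ₁ : ℝ) (j : Fin 2 × Fin 2) :
    zAngle θ₀ θ₁ (bitFlip j) = -zAngle θ₀ θ₁ j := by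
  simp only [zAngle, bitFlip, bitSign_add_one]
  ring

theorem zPhase_bitFlip_mul_zPhase (θ₀ θ₁ : ℝ) (j : Fin 2 × Fin 2) :
    zPhase θ₀ θ₁ (bitFlip j) * zPhase θ₀ θ₁ j = 1 := by
  rw [zPhase, zPhase, zAngle_bitFlip, ← exp_add]
  simp

theorem exists_zAngle_eq {f : Fin 2 × Fin 2 → ℝ} (hf : ∀ j, f (bitFlip j) = -f j) :
    ∃ φ₀ φ₁ : ℝ, zAngle φ₀ φ₁ = f := by
  refine ⟨f (0, 0) + f (0, 1), f (0, 0) - f (0, 1), funext fun j => ?_⟩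
  have h11 : f (1, 1) = -f (0, 0) := hf (0, 0)
  have h10 : f (1, 0) = -f (0, 1) := hf (0, 1)
  obtain ⟨a, b⟩ := j
  fin_cases a <;> fin_cases b <;>
    simp only [zAngle, Fin.zero_eta, Fin.mk_one, bitSign_zero, bitSign_one] <;> linarith

open Real in
theorem zPhase_pi_pi (j : Fin 2 × Fin 2) : zPhase π π j = if j.1 = j.2 then -1 else 1 := by
  obtain ⟨a, b⟩ := j
  fin_cases a <;> fin_cases b <;> simp [zPhase, zAngle, bitSign, Complex.exp_neg]

open Real in
theorem zPhase_pi_halfPi_injective : Function.Injective (zPhase π (π / 2)) := by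
  have hrange : ∀ j, -π < zAngle π (π / 2) j ∧ zAngle π (π / 2) j ≤ π := by
    intro ⟨a, b⟩
    fin_cases a <;> fin_cases b <;> simp only [zAngle, Fin.zero_eta, Fin.mk_one, bitSign_zero, bitSign_one] <;> constructor <;> linarith [pi_pos]
  have hinj : Function.Injective (zAngle π (π / 2)) := by
    intro ⟨a, b⟩ ⟨c, d⟩ h
    fin_cases a <;> fin_cases b <;> fin_cases c <;> fin_cases d <;>
      simp only [zAngle, Fin.zero_eta, Fin.mk_one, bitSign_zero, bitSign_one] at h ⊢ <;> linarith [pi_pos]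
  intro j k h
  apply hinj
  have := exp_inj_of_neg_pi_lt_of_le_pi (by simpa using (hrange j).1) (by simpa using (hrange j).2)
    (by simpa using (hrange k).1) (by simpa using (hrange k).2) h
  simpa using this

open Real in
theorem map_bitFlip_of_zPhase_pi_pi {σ : Equiv.Perm (Fin 2 × Fin 2)} {φ₀ φ₁ : ℝ}
    (hσ : ∀ j, zPhase φ₀ φ₁ (σ j) = zPhase π π j) (j : Fin 2 × Fin 2) :
    σ (bitFlip j) = bitFlip (σ j) := by
  set k := σ.symm (bitFlip (σ j)) with hk
  have hkj : k ≠ j := fun h => bitFlip_ne_self (σ j) (by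
    rw [← σ.apply_symm_apply (bitFlip (σ j)), ← hk, h])
  have hprod : zPhase π π k * zPhase π π j = 1 := by
    rw [← hσ, ← hσ, hk, σ.apply_symm_apply, zPhase_bitFlip_mul_zPhase]
  have hflip : k = bitFlip j := by
    refine eq_bitFlip_of_ne hkj ?_
    rw [zPhase_pi_pi, zPhase_pi_pi] at hprod
    split_ifs at hprod <;> norm_num at hprod <;> tauto
  rw [← hflip, hk, σ.apply_symm_apply]

theorem exists_zPhase_perm_eq {σ : Equiv.Perm (Fin 2 × Fin 2)}
    (hσ : ∀ j, σ (bitFlip j) = bitFlip (σ j)) (θ₀ θ₁ : ℝ) :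
    ∃ φ₀ φ₁ : ℝ, ∀ j, zPhase φ₀ φ₁ (σ j) = zPhase θ₀ θ₁ j := by
  have hσ_symm : ∀ j, σ.symm (bitFlip j) = bitFlip (σ.symm j) := fun j => by
    rw [σ.symm_apply_eq, hσ, σ.apply_symm_apply]
  obtain ⟨φ₀, φ₁, hφ⟩ := exists_zAngle_eq (f := zAngle θ₀ θ₁ ∘ σ.symm) fun j => by
    simp only [Function.comp_apply, hσ_symm, zAngle_bitFlip]
  exact ⟨φ₀, φ₁, fun j => by simp [zPhase, hφ]⟩

theorem phase_carrier_iff (U : Matrix (Fin 2 × Fin 2) (Fin 2 × Fin 2) ℂ)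
    (hU : U ∈ Matrix.specialUnitaryGroup (Fin 2 × Fin 2) ℂ) :
    IsPhaseCarrier U ↔
      ∃ π : Equiv.Perm (Fin 2 × Fin 2),
        (∀ i j : Fin 2 × Fin 2, ‖U i j‖ = if i = π j then 1 else 0) ∧
        (∀ a b : Fin 2, π (a + 1, b + 1) = ((π (a, b)).1 + 1, (π (a, b)).2 + 1)) := by
  rw [isPhaseCarrier_iff]
  constructor
  · intro hcarrier
    obtain ⟨φ₀, φ₁, hφ⟩ := hcarrier Real.pi (Real.pi / 2)
    obtain ⟨σ, hσ⟩ := exists_perm_norm_eq_of_mem_unitaryGroup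
      (specialUnitaryGroup_le_unitaryGroup hU) fun i j k hj hk =>
        zPhase_pi_halfPi_injective ((hφ i j hj).symm.trans (hφ i k hk))
    have hdiag : ∀ j, U (σ j) j ≠ 0 := fun j => by simp [← norm_ne_zero_iff, hσ]
    obtain ⟨ψ₀, ψ₁, hψ⟩ := hcarrier Real.pi Real.pi
    exact ⟨σ, hσ, fun a b => map_bitFlip_of_zPhase_pi_pi (fun j => hψ _ _ (hdiag j)) (a, b)⟩
  · rintro ⟨σ, hσ, hflip⟩ θ₀ θ₁
    obtain ⟨φ₀, φ₁, hφ⟩ := exists_zPhase_perm_eq (fun j => hflip j.1 j.2) θ₀ θ₁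
    refine ⟨φ₀, φ₁, fun i j hij => ?_⟩
    have hi : i = σ j := by
      by_contra h
      simp [← norm_ne_zero_iff, hσ, h] at hij
    rw [hi, hφ]
end

section
/- For ω₁, ω₂, ω₃ ∈ ℝ, let a_t^{(0)} = cos(ω_t/2), a_t^{(1)} = sin(ω_t/2), and define U_{ω₁,ω₂,ω₃}(u₁, u₂) = a₁^{(0)}a₂^{(0)}a₃^{(0)} - a₁^{(0)}a₂^{(1)}a₃^{(1)} u₂ - a₁^{(1)}a₂^{(0)}a₃^{(1)} u₁u₂ - a₁^{(1)}a₂^{(1)}a₃^{(0)} u₁ for complex u₁, u₂. Then the set A_{ω₁,ω₂,ω₃} = {Z_{θ₀} X_{ω₁} Z_{θ₁} X_{ω₂} Z_{θ₂} X_{ω₃} Z_{θ₃} : θ₀ + θ₁ + θ₂ + θ₃ = 0} covers SU(2)/{±I} (for every V ∈ SU(2), some element of A_{ω₁,ω₂,ω₃} lies in {V, -V}) if and only if for every z ∈ ℂ with |z| ≤ 1 there exist u₁, u₂ ∈ ℂ with |u₁| = |u₂| = 1 such that U_{ω₁,ω₂,ω₃}(u₁, u₂) ∈ {z, -z}. 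-/
/-!
With `θ₀ + θ₁ + θ₂ + θ₃ = 0` the scalar phases `e^{iθ/2}` of the four `Zgate`s cancel, and the
`(0,0)` entry of the product is `Ufun ω₁ ω₂ ω₃ (e^{-iθ₁}) (e^{-iθ₂})`. An element of `SU(2)` has the
form `!![a, -conj b; b, conj a]` with `|a|² + |b|² = 1`, so its `(0,0)` entry ranges over the closed
unit disk and determines it up to conjugation by a `Zgate`; such a conjugation is absorbed into
`θ₀` and `θ₃` without changing their sum.
-/

open Complex Matrix

/-- The complex function `U_{ω₁,ω₂,ω₃}(u₁, u₂)` from the uniqueness analysis. -/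
noncomputable def Ufun (ω₁ ω₂ ω₃ : ℝ) (u₁ u₂ : ℂ) : ℂ :=
  (Real.cos (ω₁ / 2) * Real.cos (ω₂ / 2) * Real.cos (ω₃ / 2) : ℝ) -
    (Real.cos (ω₁ / 2) * Real.sin (ω₂ / 2) * Real.sin (ω₃ / 2) : ℝ) * u₂ -
    (Real.sin (ω₁ / 2) * Real.cos (ω₂ / 2) * Real.sin (ω₃ / 2) : ℝ) * (u₁ * u₂) -
    (Real.sin (ω₁ / 2) * Real.sin (ω₂ / 2) * Real.cos (ω₃ / 2) : ℝ) * u₁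

open ComplexConjugate

namespace Matrix

lemma mem_specialUnitaryGroup_fin_two_iff {M : Matrix (Fin 2) (Fin 2) ℂ} :
    M ∈ specialUnitaryGroup (Fin 2) ℂ ↔
      ∃ a b : ℂ, M = !![a, -conj b; b, conj a] ∧ ‖a‖ ^ 2 + ‖b‖ ^ 2 = 1 := by
  rw [mem_specialUnitaryGroup_iff, mem_unitaryGroup_iff']
  constructor
  · rintro ⟨hU, hdet⟩
    have hstar : star M = adjugate M := by
      rw [← inv_eq_left_inv hU, inv_def, hdet, Ring.inverse_one, one_smul]
    have h11 : conj (M 0 0) = M 1 1 := by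
      simpa [adjugate_fin_two] using congrFun (congrFun hstar 0) 0
    have h01 : -conj (M 1 0) = M 0 1 := by
      simpa [adjugate_fin_two] using congrArg (- ·) (congrFun (congrFun hstar 0) 1)
    have hnorm : ((‖M 0 0‖ ^ 2 + ‖M 1 0‖ ^ 2 : ℝ) : ℂ) = 1 := by
      simpa [mul_apply, Fin.sum_univ_two, conj_mul'] using congrFun (congrFun hU 0) 0
    refine ⟨M 0 0, M 1 0, ?_, by exact_mod_cast hnorm⟩
    rw [h11, h01]
    exact eta_fin_two M
  · rintro ⟨a, b, rfl, h⟩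
    have hab : (‖a‖ ^ 2 + ‖b‖ ^ 2 : ℂ) = 1 := by exact_mod_cast h
    have hba : (‖b‖ ^ 2 + ‖a‖ ^ 2 : ℂ) = 1 := by rw [add_comm, hab]
    refine ⟨?_, ?_⟩
    · ext i j
      fin_cases i <;> fin_cases j <;>
        simp [mul_apply, Fin.sum_univ_two, mul_conj', mul_comm, hab, hba]
    · simp [det_fin_two_of, conj_mul', mul_conj', hab]

lemma neg_mem_specialUnitaryGroup_fin_two {V : Matrix (Fin 2) (Fin 2) ℂ}
    (hV : V ∈ specialUnitaryGroup (Fin 2) ℂ) : -V ∈ specialUnitaryGroup (Fin 2) ℂ := by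
  obtain ⟨a, b, rfl, h⟩ := mem_specialUnitaryGroup_fin_two_iff.mp hV
  exact mem_specialUnitaryGroup_fin_two_iff.mpr ⟨-a, -b, by simp, by simpa using h⟩

lemma exists_mem_specialUnitaryGroup_apply_zero_zero_eq {z : ℂ} (hz : ‖z‖ ≤ 1) :
    ∃ V ∈ specialUnitaryGroup (Fin 2) ℂ, V 0 0 = z := by
  refine ⟨!![z, -conj (√(1 - ‖z‖ ^ 2) : ℂ); (√(1 - ‖z‖ ^ 2) : ℂ), conj z],
    mem_specialUnitaryGroup_fin_two_iff.mpr ⟨_, _, rfl, ?_⟩, rfl⟩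
  rw [norm_real, Real.norm_eq_abs, sq_abs, Real.sq_sqrt (by nlinarith [norm_nonneg z])]
  ring

end Matrix

namespace Complex

lemma exists_exp_mul_I_mul_eq {b d : ℂ} (h : ‖b‖ = ‖d‖) : ∃ φ : ℝ, exp (φ * I) * b = d := by
  refine ⟨arg d - arg b, ?_⟩
  calc exp (↑(arg d - arg b) * I) * b
      = exp (↑(arg d - arg b) * I) * (‖b‖ * exp (arg b * I)) := by rw [norm_mul_exp_arg_mul_I]
    _ = ‖d‖ * exp (arg d * I) := by rw [h, mul_left_comm, ← exp_add]; push_cast; ring_nf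
    _ = d := norm_mul_exp_arg_mul_I d

end Complex

lemma Zgate_mem_specialUnitaryGroup (θ : ℝ) : Zgate θ ∈ specialUnitaryGroup (Fin 2) ℂ := by
  refine mem_specialUnitaryGroup_fin_two_iff.mpr ⟨exp (θ / 2 * I), 0, ?_, ?_⟩
  · simp [Zgate, ← exp_conj, map_ofNat]
  · simp [norm_exp]

lemma Xgate_mem_specialUnitaryGroup (σ : ℝ) : Xgate σ ∈ specialUnitaryGroup (Fin 2) ℂ := by
  refine mem_specialUnitaryGroup_fin_two_iff.mpr ⟨Real.cos (σ / 2), -I * Real.sin (σ / 2), ?_, ?_⟩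
  · simp [Xgate, -ofReal_cos, -ofReal_sin, conj_ofReal]
  · simp [sq_abs, -ofReal_cos, -ofReal_sin]

lemma Zgate_mul_Zgate (α β : ℝ) : Zgate α * Zgate β = Zgate (α + β) := by
  simp [Zgate, ← exp_add, add_div, add_mul, add_comm]

lemma Zgate_mul_mul_Zgate_neg (α : ℝ) (p q r s : ℂ) :
    Zgate α * !![p, q; r, s] * Zgate (-α) = !![p, exp (α * I) * q; exp (-α * I) * r, s] := by
  have hhalf : ∀ x : ℂ, x / 2 * I + x / 2 * I = x * I := fun x => by ring
  simp [Zgate, mul_right_comm _ _ (cexp _), ← exp_add, neg_div, ← neg_add, hhalf]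

lemma exists_Zgate_conj_eq_of_apply_zero_zero_eq {W V : Matrix (Fin 2) (Fin 2) ℂ}
    (hW : W ∈ specialUnitaryGroup (Fin 2) ℂ) (hV : V ∈ specialUnitaryGroup (Fin 2) ℂ)
    (h : W 0 0 = V 0 0) : ∃ α : ℝ, Zgate α * W * Zgate (-α) = V := by
  obtain ⟨a, b, rfl, hab⟩ := mem_specialUnitaryGroup_fin_two_iff.mp hW
  obtain ⟨c, d, rfl, hcd⟩ := mem_specialUnitaryGroup_fin_two_iff.mp hV
  obtain rfl : a = c := by simpa using h
  have hbd : ‖b‖ = ‖d‖ := (sq_eq_sq₀ (norm_nonneg b) (norm_nonneg d)).mp (by linarith)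
  obtain ⟨φ, hφ⟩ := exists_exp_mul_I_mul_eq hbd
  refine ⟨-φ, ?_⟩
  have hφ' : exp (-φ * I) * conj b = conj d := by
    rw [← hφ, map_mul, ← exp_conj]; simp
  rw [Zgate_mul_mul_Zgate_neg]
  push_cast
  rw [neg_neg, hφ, mul_neg, hφ']

noncomputable def phaseGate (u : ℂ) : Matrix (Fin 2) (Fin 2) ℂ := !![1, 0; 0, u]

lemma Zgate_eq_smul_phaseGate (θ : ℝ) : Zgate θ = exp (θ / 2 * I) • phaseGate (exp (-θ * I)) := by
  have hhalf : -(θ / 2 * I) = θ / 2 * I + -(θ * I) := by ring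
  ext i j
  fin_cases i <;> fin_cases j <;> simp [Zgate, phaseGate, ← exp_add, hhalf]

lemma phaseGate_mul_mul_phaseGate_apply_zero_zero (u v : ℂ) (M : Matrix (Fin 2) (Fin 2) ℂ) :
    (phaseGate u * M * phaseGate v) 0 0 = M 0 0 := by
  rw [eta_fin_two M]
  simp [phaseGate]

lemma Xgate_phaseGate_apply_zero_zero (ω₁ ω₂ ω₃ : ℝ) (u₁ u₂ : ℂ) :
    (Xgate ω₁ * phaseGate u₁ * Xgate ω₂ * phaseGate u₂ * Xgate ω₃) 0 0 = Ufun ω₁ ω₂ ω₃ u₁ u₂ := by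
  simp only [Xgate, phaseGate, Ufun, mul_fin_two, of_apply, cons_val', cons_val_zero, empty_val',
    cons_val_fin_one]
  push_cast
  ring_nf
  simp only [I_sq]
  ring

noncomputable def gateProduct (ω₁ ω₂ ω₃ θ₀ θ₁ θ₂ θ₃ : ℝ) : Matrix (Fin 2) (Fin 2) ℂ :=
  Zgate θ₀ * Xgate ω₁ * Zgate θ₁ * Xgate ω₂ * Zgate θ₂ * Xgate ω₃ * Zgate θ₃

lemma gateProduct_apply_zero_zero (ω₁ ω₂ ω₃ : ℝ) {θ₀ θ₁ θ₂ θ₃ : ℝ} (h : θ₀ + θ₁ + θ₂ + θ₃ = 0) :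
    gateProduct ω₁ ω₂ ω₃ θ₀ θ₁ θ₂ θ₃ 0 0 = Ufun ω₁ ω₂ ω₃ (exp (-θ₁ * I)) (exp (-θ₂ * I)) := by
  have hphase : θ₃ / 2 * I + (θ₂ / 2 * I + (θ₁ / 2 * I + θ₀ / 2 * I)) = 0 := by
    have h' : (θ₀ + θ₁ + θ₂ + θ₃ : ℂ) = 0 := by exact_mod_cast h
    linear_combination (I / 2) * h'
  have hfactor : gateProduct ω₁ ω₂ ω₃ θ₀ θ₁ θ₂ θ₃ = phaseGate (exp (-θ₀ * I)) *
      (Xgate ω₁ * phaseGate (exp (-θ₁ * I)) * Xgate ω₂ * phaseGate (exp (-θ₂ * I)) * Xgate ω₃) *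
      phaseGate (exp (-θ₃ * I)) := by
    simp only [gateProduct, Zgate_eq_smul_phaseGate, smul_mul_assoc, mul_smul_comm, smul_smul,
      ← exp_add, hphase, exp_zero, one_smul, mul_assoc]
  rw [hfactor, phaseGate_mul_mul_phaseGate_apply_zero_zero, Xgate_phaseGate_apply_zero_zero]

lemma gateProduct_mem_specialUnitaryGroup (ω₁ ω₂ ω₃ θ₀ θ₁ θ₂ θ₃ : ℝ) :
    gateProduct ω₁ ω₂ ω₃ θ₀ θ₁ θ₂ θ₃ ∈ specialUnitaryGroup (Fin 2) ℂ :=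
  have Z := Zgate_mem_specialUnitaryGroup
  have X := Xgate_mem_specialUnitaryGroup
  mul_mem (mul_mem (mul_mem (mul_mem (mul_mem (mul_mem (Z θ₀) (X ω₁)) (Z θ₁)) (X ω₂)) (Z θ₂))
    (X ω₃)) (Z θ₃)

lemma Zgate_mul_gateProduct_mul_Zgate (ω₁ ω₂ ω₃ α β θ₀ θ₁ θ₂ θ₃ : ℝ) :
    Zgate α * gateProduct ω₁ ω₂ ω₃ θ₀ θ₁ θ₂ θ₃ * Zgate β =
      gateProduct ω₁ ω₂ ω₃ (α + θ₀) θ₁ θ₂ (θ₃ + β) := by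
  simp only [gateProduct, ← Zgate_mul_Zgate, mul_assoc]

lemma exists_gateProduct_eq_of_Ufun_eq {ω₁ ω₂ ω₃ : ℝ} {V : Matrix (Fin 2) (Fin 2) ℂ}
    (hV : V ∈ specialUnitaryGroup (Fin 2) ℂ) {u₁ u₂ : ℂ} (hu₁ : ‖u₁‖ = 1) (hu₂ : ‖u₂‖ = 1)
    (h : Ufun ω₁ ω₂ ω₃ u₁ u₂ = V 0 0) :
    ∃ θ₀ θ₁ θ₂ θ₃ : ℝ, θ₀ + θ₁ + θ₂ + θ₃ = 0 ∧ gateProduct ω₁ ω₂ ω₃ θ₀ θ₁ θ₂ θ₃ = V := by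
  obtain ⟨φ₁, rfl⟩ := (norm_eq_one_iff u₁).mp hu₁
  obtain ⟨φ₂, rfl⟩ := (norm_eq_one_iff u₂).mp hu₂
  have h00 : gateProduct ω₁ ω₂ ω₃ 0 (-φ₁) (-φ₂) (φ₁ + φ₂) 0 0 = V 0 0 := by
    rw [gateProduct_apply_zero_zero _ _ _ (by ring), ← h]
    simp
  obtain ⟨α, hα⟩ := exists_Zgate_conj_eq_of_apply_zero_zero_eq
    (gateProduct_mem_specialUnitaryGroup ..) hV h00
  exact ⟨α, -φ₁, -φ₂, φ₁ + φ₂ + -α, by ring,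
    by rw [← hα, Zgate_mul_gateProduct_mul_Zgate, add_zero]⟩

theorem covering_iff_Ufun_covers_disk (ω₁ ω₂ ω₃ : ℝ) :
    (∀ V : Matrix (Fin 2) (Fin 2) ℂ, V ∈ Matrix.specialUnitaryGroup (Fin 2) ℂ →
      ∃ θ₀ θ₁ θ₂ θ₃ : ℝ, θ₀ + θ₁ + θ₂ + θ₃ = 0 ∧
        (Zgate θ₀ * Xgate ω₁ * Zgate θ₁ * Xgate ω₂ * Zgate θ₂ * Xgate ω₃ * Zgate θ₃ = V ∨
          Zgate θ₀ * Xgate ω₁ * Zgate θ₁ * Xgate ω₂ * Zgate θ₂ * Xgate ω₃ * Zgate θ₃ = -V)) ↔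
    (∀ z : ℂ, ‖z‖ ≤ 1 →
      ∃ u₁ u₂ : ℂ, ‖u₁‖ = 1 ∧ ‖u₂‖ = 1 ∧
        (Ufun ω₁ ω₂ ω₃ u₁ u₂ = z ∨ Ufun ω₁ ω₂ ω₃ u₁ u₂ = -z)) := by
  constructor
  · intro hcover z hz
    obtain ⟨V, hV, rfl⟩ := exists_mem_specialUnitaryGroup_apply_zero_zero_eq hz
    obtain ⟨θ₀, θ₁, θ₂, θ₃, hθ, hP⟩ := hcover V hV
    refine ⟨exp (-θ₁ * I), exp (-θ₂ * I), by simpa using norm_exp_ofReal_mul_I (-θ₁),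
      by simpa using norm_exp_ofReal_mul_I (-θ₂), ?_⟩
    rw [← gateProduct_apply_zero_zero ω₁ ω₂ ω₃ hθ]
    rcases hP with hP | hP
    · exact Or.inl (congrFun (congrFun hP 0) 0)
    · exact Or.inr (congrFun (congrFun hP 0) 0)
  · intro hdisk V hV
    obtain ⟨u₁, u₂, hu₁, hu₂, hU⟩ := hdisk (V 0 0) (entry_norm_bound_of_unitary hV.1 0 0)
    rcases hU with hU | hU
    · obtain ⟨θ₀, θ₁, θ₂, θ₃, hθ, hP⟩ := exists_gateProduct_eq_of_Ufun_eq hV hu₁ hu₂ hU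
      exact ⟨θ₀, θ₁, θ₂, θ₃, hθ, Or.inl hP⟩
    · obtain ⟨θ₀, θ₁, θ₂, θ₃, hθ, hP⟩ := exists_gateProduct_eq_of_Ufun_eq
        (neg_mem_specialUnitaryGroup_fin_two hV) hu₁ hu₂ hU
      exact ⟨θ₀, θ₁, θ₂, θ₃, hθ, Or.inr hP⟩
end

section
/- Let b₀₀, b₀₁, b₁₀, b₁₁ ∈ ℝ and define f(u₁, u₂) = b₀₀ + b₀₁ u₁ + b₁₀ u₂ + b₁₁ u₁u₂ for complex u₁, u₂, and let R_f = ⋃_{|u₁|=|u₂|=1} {f(u₁,u₂), -f(u₁,u₂)}. Then R_f equals the closed unit disk {z ∈ ℂ : |z| ≤ 1} if and only if b₀₀ = 0, one of b₀₁, b₁₀, b₁₁ is 0, and the other two are each ±1/2. -/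
/-!
Write p, q, r, s for b₀₀, b₀₁, b₁₀, b₁₁ and f = (p + q u₁) + (r + s u₁) u₂. Choosing u₂ so that the
two summands point the same way shows that |f| ≤ 1 on the torus amounts to
φ(u) = |p + q u| + |r + s u| ≤ 1 on the circle, and a unimodular value ±f(u₁, u₂) forces equality
in the triangle inequality: φ(u₁) = 1 and p + q u₁ is a real multiple of that value.
As |x + y u|² = x² + y² + 2xy Re u, both terms of φ are square roots of affine functions of Re u.
Reaching ±i gives u₀ with p + q Re u₀ = 0; if q ≠ 0, reaching ±1 gives u₁ = ±1 with φ(u₁) = 1.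
If Re u₀ = u₁, then p + q u vanishes at u₁ and grows like a square root nearby, beating the at most
linear decrease of the other term; otherwise strict concavity of the square root on the segment
between Re u₀ and u₁ forces pq = rs = 0. So p = 0 and one of q, r, s vanishes, and after
reparametrizing the torus f = x v + y w, whose range is the annulus ||x| - |y|| ≤ |z| ≤ |x| + |y|.
-/

open Complex

theorem norm_smul_add_eq_of_norm_add_eq {E : Type*} [NormedAddCommGroup E] [NormedSpace ℝ E]
    [StrictConvexSpace ℝ E] {a c : E} (h : ‖a + c‖ = ‖a‖ + ‖c‖) :
    ‖a‖ • (a + c) = ‖a + c‖ • a :=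
  ((SameRay.refl a).add_right (sameRay_iff_norm_add.2 h)).norm_smul_eq

theorem Complex.exists_norm_eq_one_re_eq {c : ℝ} (hc : |c| ≤ 1) :
    ∃ u : ℂ, ‖u‖ = 1 ∧ u.re = c := by
  obtain ⟨h₁, h₂⟩ := abs_le.1 hc
  exact ⟨exp (Real.arccos c * I), norm_exp_ofReal_mul_I _, by
    rw [exp_ofReal_mul_I_re, Real.cos_arccos h₁ h₂]⟩

theorem Complex.exists_norm_eq_one_norm_add_mul_eq (a b : ℂ) :
    ∃ w : ℂ, ‖w‖ = 1 ∧ ‖a + b * w‖ = ‖a‖ + ‖b‖ := by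
  refine ⟨exp ((arg a - arg b : ℝ) * I), norm_exp_ofReal_mul_I _, ?_⟩
  have hsum : a + b * exp ((arg a - arg b : ℝ) * I) = ((‖a‖ + ‖b‖ : ℝ) : ℂ) * exp (arg a * I) := by
    have hb : exp ((arg a - arg b : ℝ) * I) * exp (arg b * I) = exp (arg a * I) := by
      rw [← Complex.exp_add]; push_cast; ring_nf
    calc a + b * exp ((arg a - arg b : ℝ) * I)
        = ‖a‖ * exp (arg a * I) + ‖b‖ * exp (arg b * I) * exp ((arg a - arg b : ℝ) * I) := by
          rw [norm_mul_exp_arg_mul_I, norm_mul_exp_arg_mul_I]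
      _ = _ := by rw [mul_assoc, mul_comm (exp (arg b * I)), hb]; push_cast; ring
  rw [hsum, norm_mul, norm_exp_ofReal_mul_I, mul_one, norm_real, Real.norm_of_nonneg (by positivity)]

theorem Complex.exists_norm_eq_one_add_eq {z : ℂ} (hz : ‖z‖ ≤ 2) :
    ∃ w₁ w₂ : ℂ, ‖w₁‖ = 1 ∧ ‖w₂‖ = 1 ∧ z = w₁ + w₂ := by
  obtain ⟨u, hu, hre⟩ := exists_norm_eq_one_re_eq (c := ‖z‖ / 2)
    (by rw [abs_of_nonneg (by positivity)]; linarith)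
  set e := exp (arg z * I)
  have he : ‖e‖ = 1 := norm_exp_ofReal_mul_I _
  refine ⟨e * u, e * (starRingEnd ℂ) u, by simp [he, hu], by simp [he, hu], ?_⟩
  rw [← mul_add, add_conj, hre]
  conv_lhs => rw [← norm_mul_exp_arg_mul_I z]
  push_cast; ring

theorem Complex.sq_norm_ofReal_add_mul (x y : ℝ) {u : ℂ} (hu : ‖u‖ = 1) :
    ‖(x : ℂ) + y * u‖ ^ 2 = x ^ 2 + y ^ 2 + 2 * x * y * u.re := by
  have hu' : u.re ^ 2 + u.im ^ 2 = 1 := by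
    rw [← one_pow 2, ← hu, Complex.sq_norm, normSq_apply]; ring
  rw [Complex.sq_norm, normSq_apply]
  simp only [add_re, ofReal_re, mul_re, ofReal_im, zero_mul, sub_zero, add_im, mul_im, zero_add]
  linear_combination y ^ 2 * hu'

theorem Complex.exists_real_mul_eq_of_norm_add_le {a c z : ℂ} (hz : ‖z‖ = 1)
    (hac : z = a + c ∨ z = -(a + c)) (hle : ‖a‖ + ‖c‖ ≤ 1) :
    ‖a‖ + ‖c‖ = 1 ∧ ∃ t : ℝ, a = t * z := by
  have h1 : ‖a + c‖ = 1 := by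
    rcases hac with h | h
    · rw [← h, hz]
    · rw [← norm_neg, ← h, hz]
  have heq : ‖a + c‖ = ‖a‖ + ‖c‖ := le_antisymm (norm_add_le a c) (h1 ▸ hle)
  have key := norm_smul_add_eq_of_norm_add_eq heq
  rw [h1, one_smul, real_smul] at key
  refine ⟨heq ▸ h1, hac.elim (fun h => ⟨‖a‖, ?_⟩) (fun h => ⟨-‖a‖, ?_⟩)⟩ <;>
    rw [h] <;> push_cast <;> linear_combination -key

theorem eq_and_eq_of_quadMean_add_le_mean {a₀ a₁ b₀ b₁ a b : ℝ} (ha : 0 ≤ a) (hb : 0 ≤ b)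
    (ha2 : a ^ 2 = (a₀ ^ 2 + a₁ ^ 2) / 2) (hb2 : b ^ 2 = (b₀ ^ 2 + b₁ ^ 2) / 2)
    (hab : a + b ≤ (a₀ + a₁ + b₀ + b₁) / 2) : a₀ = a₁ ∧ b₀ = b₁ := by
  have ha' : (a₀ + a₁) / 2 ≤ a := by nlinarith [sq_nonneg (a₀ - a₁)]
  have hb' : (b₀ + b₁) / 2 ≤ b := by nlinarith [sq_nonneg (b₀ - b₁)]
  constructor <;> nlinarith [sq_nonneg (a₀ - a₁), sq_nonneg (b₀ - b₁)]

theorem le_of_add_le_one_of_sq_eq {A B x : ℝ} (hA : 0 ≤ A) (hB : 0 ≤ B) (hB2 : B ^ 2 = 1 - x)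
    (h : A + B ≤ 1) : A ≤ x := by
  nlinarith

def signedRange (F : ℂ → ℂ → ℂ) : Set ℂ :=
  {z | ∃ u₁ u₂ : ℂ, ‖u₁‖ = 1 ∧ ‖u₂‖ = 1 ∧ (z = F u₁ u₂ ∨ z = -F u₁ u₂)}

theorem signedRange_eq_iff {F : ℂ → ℂ → ℂ} :
    signedRange F = {z | ‖z‖ ≤ 1} ↔
      (∀ u₁ u₂ : ℂ, ‖u₁‖ = 1 → ‖u₂‖ = 1 → ‖F u₁ u₂‖ ≤ 1) ∧
        ∀ z : ℂ, ‖z‖ ≤ 1 → z ∈ signedRange F := by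
  constructor
  · intro h
    exact ⟨fun u₁ u₂ h₁ h₂ => (h ▸ ⟨u₁, u₂, h₁, h₂, Or.inl rfl⟩ : F u₁ u₂ ∈ {z : ℂ | ‖z‖ ≤ 1}),
      fun z hz => h ▸ hz⟩
  · rintro ⟨hF, hcover⟩
    refine Set.Subset.antisymm ?_ hcover
    rintro z ⟨u₁, u₂, h₁, h₂, rfl | rfl⟩
    · exact hF u₁ u₂ h₁ h₂
    · exact (norm_neg _).trans_le (hF u₁ u₂ h₁ h₂)

theorem signedRange_mono {F G : ℂ → ℂ → ℂ}
    (h : ∀ u₁ u₂ : ℂ, ‖u₁‖ = 1 → ‖u₂‖ = 1 →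
      ∃ v₁ v₂ : ℂ, ‖v₁‖ = 1 ∧ ‖v₂‖ = 1 ∧ F u₁ u₂ = G v₁ v₂) :
    signedRange F ⊆ signedRange G := by
  rintro z ⟨u₁, u₂, h₁, h₂, hz⟩
  obtain ⟨v₁, v₂, hv₁, hv₂, hFG⟩ := h u₁ u₂ h₁ h₂
  exact ⟨v₁, v₂, hv₁, hv₂, hFG ▸ hz⟩

def bilinear (p q r s : ℝ) (u₁ u₂ : ℂ) : ℂ := p + q * u₁ + r * u₂ + s * (u₁ * u₂)

theorem bilinear_eq_add_mul (p q r s : ℝ) (u₁ u₂ : ℂ) :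
    bilinear p q r s u₁ u₂ = (p + q * u₁) + (r + s * u₁) * u₂ := by
  unfold bilinear; ring

theorem signedRange_bilinear_comm (p q r s : ℝ) :
    signedRange (bilinear p q r s) = signedRange (bilinear p r q s) := by
  have h (q r : ℝ) : signedRange (bilinear p q r s) ⊆ signedRange (bilinear p r q s) :=
    signedRange_mono fun u₁ u₂ h₁ h₂ => ⟨u₂, u₁, h₂, h₁, by unfold bilinear; ring⟩
  exact (h q r).antisymm (h r q)

theorem signedRange_bilinear_zero_zero (r s : ℝ) :
    signedRange (bilinear 0 0 r s) = signedRange (bilinear 0 r s 0) := by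
  refine (signedRange_mono fun u₁ u₂ h₁ h₂ => ⟨u₂, u₁ * u₂, h₂, by simp [h₁, h₂], ?_⟩).antisymm
    (signedRange_mono fun v w hv hw => ⟨w / v, v, by simp [hv, hw], hv, ?_⟩)
  · unfold bilinear; push_cast; ring
  · have hv0 : v ≠ 0 := norm_ne_zero_iff.1 (by simp [hv])
    unfold bilinear; push_cast; field_simp; ring

theorem signedRange_linear_eq_iff (x y : ℝ) :
    signedRange (bilinear 0 x y 0) = {z | ‖z‖ ≤ 1} ↔ |x| = 1 / 2 ∧ |y| = 1 / 2 := by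
  have hF (v w : ℂ) : bilinear 0 x y 0 v w = x * v + y * w := by
    unfold bilinear; push_cast; ring
  have hnorm {v w : ℂ} (hv : ‖v‖ = 1) (hw : ‖w‖ = 1) : ‖(x : ℂ) * v + y * w‖ ≤ |x| + |y| :=
    (norm_add_le _ _).trans_eq (by simp [hv, hw])
  rw [signedRange_eq_iff]
  simp only [signedRange, hF]
  constructor
  · rintro ⟨hle, hcover⟩
    obtain ⟨v, w, hv, hw, h0⟩ := hcover 0 (by simp)
    have hxy : |x| = |y| := by
      have h0' : (x : ℂ) * v = -(y * w) := by
        rcases h0 with h | h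
        · linear_combination -h
        · linear_combination h
      simpa [hv, hw] using congrArg norm h0'
    obtain ⟨w, hw, hmax⟩ := exists_norm_eq_one_norm_add_mul_eq x y
    have hsum_le : |x| + |y| ≤ 1 := by simpa [hmax] using hle 1 w (by simp) hw
    obtain ⟨v, w, hv, hw, h1⟩ := hcover 1 (by simp)
    have hsum_ge : 1 ≤ |x| + |y| := by
      refine le_of_eq_of_le ?_ (hnorm hv hw)
      rcases h1 with h | h
      · rw [← h, norm_one]
      · rw [← norm_neg, ← h, norm_one]
    constructor <;> linarith
  · rintro ⟨hx, hy⟩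
    refine ⟨fun v w hv hw => (hnorm hv hw).trans (by rw [hx, hy]; norm_num), fun z hz => ?_⟩
    obtain ⟨w₁, w₂, h₁, h₂, hz₂⟩ := exists_norm_eq_one_add_eq (z := 2 * z) (by simp; linarith)
    have hx2 : x ^ 2 = 1 / 4 := by rw [← sq_abs, hx]; norm_num
    have hy2 : y ^ 2 = 1 / 4 := by rw [← sq_abs, hy]; norm_num
    refine ⟨2 * x * w₁, 2 * y * w₂, ?_, ?_, Or.inl ?_⟩
    · simp [h₁, hx]
    · simp [h₂, hy]
    · have hx2' : (x : ℂ) ^ 2 = 1 / 4 := by rw [← ofReal_pow, hx2]; push_cast; ring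
      have hy2' : (y : ℂ) ^ 2 = 1 / 4 := by rw [← ofReal_pow, hy2]; push_cast; ring
      linear_combination hz₂ / 2 - 2 * w₁ * hx2' - 2 * w₂ * hy2'

section

variable {p q r s : ℝ}

theorem norm_add_norm_le_one_of_norm_bilinear_le
    (hF : ∀ u₁ u₂ : ℂ, ‖u₁‖ = 1 → ‖u₂‖ = 1 → ‖bilinear p q r s u₁ u₂‖ ≤ 1) {u : ℂ}
    (hu : ‖u‖ = 1) : ‖(p : ℂ) + q * u‖ + ‖(r : ℂ) + s * u‖ ≤ 1 := by
  obtain ⟨w, hw, hmax⟩ := exists_norm_eq_one_norm_add_mul_eq (p + q * u) (r + s * u)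
  rw [← hmax, ← bilinear_eq_add_mul]
  exact hF u w hu hw

theorem exists_real_mul_eq_of_mem_signedRange_bilinear
    (hsum : ∀ u : ℂ, ‖u‖ = 1 → ‖(p : ℂ) + q * u‖ + ‖(r : ℂ) + s * u‖ ≤ 1)
    {z : ℂ} (hz : ‖z‖ = 1)
    (hmem : z ∈ signedRange (bilinear p q r s)) :
    ∃ u : ℂ, ‖u‖ = 1 ∧ ‖(p : ℂ) + q * u‖ + ‖(r : ℂ) + s * u‖ = 1 ∧
      ∃ t : ℝ, (p : ℂ) + q * u = t * z := by
  obtain ⟨u₁, u₂, h₁, h₂, hz'⟩ := hmem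
  simp only [bilinear_eq_add_mul] at hz'
  have hle : ‖(p : ℂ) + q * u₁‖ + ‖((r : ℂ) + s * u₁) * u₂‖ ≤ 1 := by
    rw [norm_mul, h₂, mul_one]; exact hsum u₁ h₁
  obtain ⟨heq, ht⟩ := exists_real_mul_eq_of_norm_add_le hz hz' hle
  rw [norm_mul, h₂, mul_one] at heq
  exact ⟨u₁, h₁, heq, ht⟩

theorem mul_eq_zero_and_mul_eq_zero_of_norm_add_norm_eq_one
    (hsum : ∀ u : ℂ, ‖u‖ = 1 → ‖(p : ℂ) + q * u‖ + ‖(r : ℂ) + s * u‖ ≤ 1)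
    {u₀ u₁ : ℂ} (hu₀ : ‖u₀‖ = 1) (hu₁ : ‖u₁‖ = 1) (h₀ : ‖(p : ℂ) + q * u₀‖ + ‖(r : ℂ) + s * u₀‖ = 1)
    (h₁ : ‖(p : ℂ) + q * u₁‖ + ‖(r : ℂ) + s * u₁‖ = 1) (hne : u₀.re ≠ u₁.re) :
    p * q = 0 ∧ r * s = 0 := by
  have hre₀ := abs_le.1 (hu₀ ▸ abs_re_le_norm u₀)
  have hre₁ := abs_le.1 (hu₁ ▸ abs_re_le_norm u₁)
  obtain ⟨u, hu, hre⟩ := exists_norm_eq_one_re_eq (c := (u₀.re + u₁.re) / 2)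
    (abs_le.2 ⟨by linarith, by linarith⟩)
  obtain ⟨ha, hb⟩ := eq_and_eq_of_quadMean_add_le_mean (norm_nonneg _) (norm_nonneg _)
    (a₀ := ‖(p : ℂ) + q * u₀‖) (a₁ := ‖(p : ℂ) + q * u₁‖)
    (b₀ := ‖(r : ℂ) + s * u₀‖) (b₁ := ‖(r : ℂ) + s * u₁‖)
    (by rw [sq_norm_ofReal_add_mul p q hu, sq_norm_ofReal_add_mul p q hu₀,
      sq_norm_ofReal_add_mul p q hu₁, hre]; ring)
    (by rw [sq_norm_ofReal_add_mul r s hu, sq_norm_ofReal_add_mul r s hu₀,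
      sq_norm_ofReal_add_mul r s hu₁, hre]; ring)
    (by linarith [hsum u hu])
  have ha2 := congrArg (· ^ 2) ha
  have hb2 := congrArg (· ^ 2) hb
  simp only [sq_norm_ofReal_add_mul _ _ hu₀, sq_norm_ofReal_add_mul _ _ hu₁] at ha2 hb2
  have hsub : u₀.re - u₁.re ≠ 0 := sub_ne_zero.2 hne
  exact ⟨(mul_eq_zero.1 (by linear_combination ha2 / 2)).resolve_right hsub,
    (mul_eq_zero.1 (by linear_combination hb2 / 2)).resolve_right hsub⟩

theorem norm_add_norm_lt_one_of_add_mul_re_eq_zero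
    (hsum : ∀ u : ℂ, ‖u‖ = 1 → ‖(p : ℂ) + q * u‖ + ‖(r : ℂ) + s * u‖ ≤ 1)
    (hq : q ≠ 0) {u : ℂ} (hu : ‖u‖ = 1)
    (him : u.im = 0) (hp : p + q * u.re = 0) :
    ‖(p : ℂ) + q * u‖ + ‖(r : ℂ) + s * u‖ < 1 := by
  set ε := u.re
  have hε : ε ^ 2 = 1 := by
    have h := Complex.sq_norm u
    rw [hu, normSq_apply, him] at h
    linear_combination -h
  have ha : ‖(p : ℂ) + q * u‖ = 0 := by
    rw [← sq_eq_zero_iff, sq_norm_ofReal_add_mul p q hu]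
    linear_combination (p + q * ε) * hp - q ^ 2 * hε
  rw [ha, zero_add]
  by_contra hge
  have hb : ‖(r : ℂ) + s * u‖ = 1 := le_antisymm (by simpa [ha] using hsum u hu) (not_lt.1 hge)
  have hb2 := sq_norm_ofReal_add_mul r s hu
  rw [hb] at hb2
  -- Moving `Re u` by `δ` makes `‖p + q v‖` of order `√δ`, while `‖r + s v‖` drops by `O(δ)`.
  obtain ⟨c, hc, hc_lt⟩ := exists_pos_mul_lt (pow_pos (abs_pos.2 hq) 2) ((2 * r * s * ε) ^ 2)
  rw [sq_abs] at hc_lt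
  set δ := min c 1
  have hδ : 0 < δ := lt_min hc one_pos
  have hδ1 : δ ≤ 1 := min_le_right c 1
  have hδ_lt : (2 * r * s * ε) ^ 2 * δ < q ^ 2 :=
    (mul_le_mul_of_nonneg_left (min_le_left c 1) (sq_nonneg _)).trans_lt hc_lt
  have hε_le := abs_le.1 (hu ▸ abs_re_le_norm u)
  obtain ⟨v, hv, hvre⟩ := exists_norm_eq_one_re_eq (c := ε * (1 - δ))
    (abs_le.2 ⟨by nlinarith, by nlinarith⟩)
  have hA : ‖(p : ℂ) + q * v‖ ^ 2 = 2 * q ^ 2 * δ := by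
    rw [sq_norm_ofReal_add_mul p q hv, hvre, show p = -(q * ε) by linarith]
    linear_combination q ^ 2 * (2 * δ - 1) * hε
  have hB : ‖(r : ℂ) + s * v‖ ^ 2 = 1 - 2 * r * s * ε * δ := by
    rw [sq_norm_ofReal_add_mul r s hv, hvre]
    linear_combination -hb2
  have hA_le := le_of_add_le_one_of_sq_eq (norm_nonneg _) (norm_nonneg _) hB (hsum v hv)
  have hsq : 2 * q ^ 2 * δ ≤ (2 * r * s * ε * δ) ^ 2 := hA ▸ pow_le_pow_left₀ (norm_nonneg _) hA_le 2
  nlinarith [mul_lt_mul_of_pos_left hδ_lt hδ, pow_pos (abs_pos.2 hq) 2, sq_abs q]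

end

theorem eq_zero_of_signedRange_bilinear_eq {p q r s : ℝ}
    (h : signedRange (bilinear p q r s) = {z | ‖z‖ ≤ 1}) : p = 0 ∧ (q = 0 ∨ r = 0 ∨ s = 0) := by
  obtain ⟨hF, hcover⟩ := signedRange_eq_iff.1 h
  have hsum (u : ℂ) (hu : ‖u‖ = 1) := norm_add_norm_le_one_of_norm_bilinear_le hF hu
  have hunit {z : ℂ} (hz : ‖z‖ = 1) :=
    exists_real_mul_eq_of_mem_signedRange_bilinear hsum hz (hcover z hz.le)
  obtain ⟨u₀, hu₀, h₀, t₀, ht₀⟩ := hunit (z := I) (by simp)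
  have hre₀ : p + q * u₀.re = 0 := by simpa using congrArg re ht₀
  by_cases hq : q = 0
  · exact ⟨by simpa [hq] using hre₀, Or.inl hq⟩
  obtain ⟨u₁, hu₁, h₁, t₁, ht₁⟩ := hunit (z := 1) (by simp)
  have him₁ : u₁.im = 0 := by simpa [hq] using congrArg im ht₁
  by_cases hre : u₀.re = u₁.re
  · exact absurd h₁
      (norm_add_norm_lt_one_of_add_mul_re_eq_zero hsum hq hu₁ him₁ (hre ▸ hre₀)).ne
  · obtain ⟨hpq, hrs⟩ :=
      mul_eq_zero_and_mul_eq_zero_of_norm_add_norm_eq_one hsum hu₀ hu₁ h₀ h₁ hre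
    exact ⟨(mul_eq_zero.1 hpq).resolve_right hq, Or.inr (mul_eq_zero.1 hrs)⟩

theorem bilinear_range_eq_unit_disk (b₀₀ b₀₁ b₁₀ b₁₁ : ℝ) :
    ({z : ℂ | ∃ u₁ u₂ : ℂ, ‖u₁‖ = 1 ∧ ‖u₂‖ = 1 ∧
        (z = b₀₀ + b₀₁ * u₁ + b₁₀ * u₂ + b₁₁ * (u₁ * u₂) ∨
          z = -(b₀₀ + b₀₁ * u₁ + b₁₀ * u₂ + b₁₁ * (u₁ * u₂)))} =
      {z : ℂ | ‖z‖ ≤ 1}) ↔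
    (b₀₀ = 0 ∧
      ((b₀₁ = 0 ∧ (b₁₀ = 1 / 2 ∨ b₁₀ = -(1 / 2)) ∧ (b₁₁ = 1 / 2 ∨ b₁₁ = -(1 / 2))) ∨
        (b₁₀ = 0 ∧ (b₀₁ = 1 / 2 ∨ b₀₁ = -(1 / 2)) ∧ (b₁₁ = 1 / 2 ∨ b₁₁ = -(1 / 2))) ∨
        (b₁₁ = 0 ∧ (b₀₁ = 1 / 2 ∨ b₀₁ = -(1 / 2)) ∧ (b₁₀ = 1 / 2 ∨ b₁₀ = -(1 / 2))))) := by
  change signedRange (bilinear b₀₀ b₀₁ b₁₀ b₁₁) = _ ↔ _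
  simp only [← abs_eq (by norm_num : (0 : ℝ) ≤ 1 / 2)]
  constructor
  · intro h
    obtain ⟨rfl, rfl | rfl | rfl⟩ := eq_zero_of_signedRange_bilinear_eq h
    · rw [signedRange_bilinear_zero_zero, signedRange_linear_eq_iff] at h
      exact ⟨rfl, Or.inl ⟨rfl, h⟩⟩
    · rw [signedRange_bilinear_comm, signedRange_bilinear_zero_zero,
        signedRange_linear_eq_iff] at h
      exact ⟨rfl, Or.inr (Or.inl ⟨rfl, h⟩)⟩
    · rw [signedRange_linear_eq_iff] at h
      exact ⟨rfl, Or.inr (Or.inr ⟨rfl, h⟩)⟩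
  · rintro ⟨rfl, ⟨rfl, h⟩ | ⟨rfl, h⟩ | ⟨rfl, h⟩⟩
    · rwa [signedRange_bilinear_zero_zero, signedRange_linear_eq_iff]
    · rwa [signedRange_bilinear_comm, signedRange_bilinear_zero_zero, signedRange_linear_eq_iff]
    · rwa [signedRange_linear_eq_iff]
end
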